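/- In an interactive i/o transition system, along any infinite path from the initial state, the number of output transitions among the first n transitions tends to infinity as n → ∞ whenever the path contains infinitely many input transitions. -/
import Mathlib


/-- A labelled transition system over actions `A` together with the silent action `τ`
(represented by `none`). -/
structure LTS (A : Type) where
  S : Type
  tr : S → Option A → S → Prop
  init : S

namespace LTS

variable {A : Type}

/-- Reflexive-transitive closure of τ-steps, `s ⇒ t`. -/
def Star (T : LTS A) : T.S → T.S → Prop :=
  Relation.ReflTransGen (fun s t => T.tr s none t)

/-- `s →(a) t`: either `s →a t`, or `a = τ` and `s = t`. -/
def OptStep (T : LTS A) (s : T.S) (a : Option A) (t : T.S) : Prop :=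
  T.tr s a t ∨ (a = none ∧ s = t)

/-- `R` is a branching bisimulation from `T₁` to `T₂`. -/
def IsBB (T₁ T₂ : LTS A) (R : T₁.S → T₂.S → Prop) : Prop :=
  (∀ s₁ s₂, R s₁ s₂ → ∀ a s₁', T₁.tr s₁ a s₁' →
    ∃ s₂'' s₂', T₂.Star s₂ s₂'' ∧ T₂.OptStep s₂'' a s₂' ∧ R s₁ s₂'' ∧ R s₁' s₂') ∧
  (∀ s₁ s₂, R s₁ s₂ → ∀ a s₂', T₂.tr s₂ a s₂' →
    ∃ s₁'' s₁', T₁.Star s₁ s₁'' ∧ T₁.OptStep s₁'' a s₁' ∧ R s₁'' s₂ ∧ R s₁' s₂')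

/-- `T₁` and `T₂` are branching bisimilar. -/
def BBisim (T₁ T₂ : LTS A) : Prop :=
  ∃ R, IsBB T₁ T₂ R ∧ R T₁.init T₂.init

end LTS

/-- Visible labels of an i/o transition system: input actions `?b` and output actions `!b`.
The silent action τ is represented by `none : Option IOLabel`. -/
inductive IOLabel where
  | inp : Bool → IOLabel
  | out : Bool → IOLabel
deriving DecidableEq

/-- An i/o transition system: a labelled transition system over `{?0,?1,!0,!1,τ}` whose
states are partitioned into input states (`I`) and execution states (the rest),
satisfying alternation, unambiguity and totality. -/
structure IOTS extends LTS IOLabel where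
  /-- the set of input states; the execution states are its complement -/
  I : S → Prop
  init_mem : I init
  /-- Alternation, input states: transitions are labelled `?b` and go to execution states. -/
  alt_I : ∀ s a t, I s → tr s a t → (∃ b, a = some (IOLabel.inp b)) ∧ ¬ I t
  /-- Alternation, execution states: transitions are labelled `!b` or `τ` and go to input states. -/
  alt_E : ∀ s a t, ¬ I s → tr s a t → (a = none ∨ ∃ b, a = some (IOLabel.out b)) ∧ I t
  /-- Unambiguity: every execution state has exactly one outgoing transition. -/
  unamb : ∀ s, ¬ I s → ∃! p : Option IOLabel × S, tr s p.1 p.2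
  /-- Totality: every input state has exactly two outgoing transitions, labelled `?0` and `?1`. -/
  total : ∀ s, I s → ∀ b : Bool, ∃! t, tr s (some (IOLabel.inp b)) t

namespace IOTS

/-- An infinite path through the transition system, with states `p` and labels `l`. -/
def InfPath (T : IOTS) (p : ℕ → T.S) (l : ℕ → Option IOLabel) : Prop :=
  ∀ n, T.tr (p n) (l n) (p (n + 1))

/-- The sequence of input-action labels of `l` (ignoring τ and output labels)
spells out the stream `x`. -/
def SpellsInput (l : ℕ → Option IOLabel) (x : ℕ → Bool) : Prop :=
  ∃ φ : ℕ → ℕ, StrictMono φ ∧ (∀ n, l (φ n) = some (IOLabel.inp (x n))) ∧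
    ∀ m b, l m = some (IOLabel.inp b) → ∃ n, φ n = m

/-- The sequence of output-action labels of `l` (ignoring τ and input labels)
spells out the stream `y`. -/
def SpellsOutput (l : ℕ → Option IOLabel) (y : ℕ → Bool) : Prop :=
  ∃ φ : ℕ → ℕ, StrictMono φ ∧ (∀ n, l (φ n) = some (IOLabel.out (y n))) ∧
    ∀ m b, l m = some (IOLabel.out b) → ∃ n, φ n = m

/-- Interactiveness: after every input transition, every infinite path contains an
output transition. -/
def Interactive (T : IOTS) : Prop :=
  ∀ s (b : Bool) s₀, T.tr s (some (IOLabel.inp b)) s₀ →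
    ∀ (p : ℕ → T.S) (l : ℕ → Option IOLabel), p 0 = s₀ →
      (∀ n, T.tr (p n) (l n) (p (n + 1))) → ∃ j b', l j = some (IOLabel.out b')

/-- `T` realises the ω-translation `φ`: for every input stream `x` there is an infinite
path from the initial state with input stream `x`, and every such path has output
stream `φ x`. -/
def Realises (T : IOTS) (φ : (ℕ → Bool) → (ℕ → Bool)) : Prop :=
  ∀ x : ℕ → Bool,
    (∃ p l, p 0 = T.init ∧ InfPath T p l ∧ SpellsInput l x) ∧
    (∀ p l, p 0 = T.init → InfPath T p l → SpellsInput l x → SpellsOutput l (φ x))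

end IOTS

theorem stmt_13 (T : IOTS) (hint : IOTS.Interactive T)
    (p : ℕ → T.S) (l : ℕ → Option IOLabel)
    (h0 : p 0 = T.init) (hp : IOTS.InfPath T p l)
    (hinf : {k | ∃ b, l k = some (IOLabel.inp b)}.Infinite) :
    ∀ N : ℕ, ∃ n : ℕ, N ≤ {k | k < n ∧ ∃ b, l k = some (IOLabel.out b)}.ncard := by
  set S : Set ℕ := {k | ∃ b, l k = some (IOLabel.out b)} with hS
  -- S is infinite
  have hSinf : S.Infinite := by
    intro hfin
    obtain ⟨m, hm⟩ := hfin.bddAbove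
    obtain ⟨k, hk, hkm⟩ := hinf.exists_gt m
    obtain ⟨b, hb⟩ := hk
    have htr := hp k
    rw [hb] at htr
    obtain ⟨j, b', hj⟩ := hint (p k) b (p (k+1)) htr (fun i => p (k+1+i))
      (fun i => l (k+1+i)) rfl (fun i => hp (k+1+i))
    have hmem : k+1+j ∈ S := ⟨b', hj⟩
    have := hm hmem
    omega
  intro N
  have hmono := Nat.nth_strictMono (p := (· ∈ S)) hSinf
  refine ⟨Nat.nth (· ∈ S) N + 1, ?_⟩
  have hsub : (Nat.nth (· ∈ S)) '' Set.Iio N ⊆ {k | k < Nat.nth (· ∈ S) N + 1 ∧ k ∈ S} := by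
    rintro x ⟨i, hi, rfl⟩
    exact ⟨by have := hmono hi; omega, Nat.nth_mem_of_infinite hSinf i⟩
  calc N = ((Nat.nth (· ∈ S)) '' Set.Iio N).ncard := by
          rw [Set.ncard_image_of_injOn hmono.injective.injOn]
          simp [Set.ncard_eq_toFinset_card', Set.toFinset_Iio]
    _ ≤ _ := Set.ncard_le_ncard hsub ((Set.finite_Iio _).subset (fun x hx => hx.1))
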